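/- arXiv:1904.01833 — 5 statements merged into one kernel-verified Lean document; each statement's English description precedes it below -/
import Mathlib

section
/- For every x in [-1,1], the set of minimizers over y ∈ ℝ of the polynomial p(x,y) = 4 - 3xy - 4y² + xy³ + 2y⁴ equals {-1} if x < 0, equals {1} if x > 0, and equals {-1,1} if x = 0. In particular, for x ≠ 0, the unique minimizer is sign(x). -/
/-- For every `x ∈ [-1,1]`, the set of minimizers over `y ∈ ℝ` of
`p(x,y) = 4 - 3xy - 4y² + xy³ + 2y⁴` equals `{-1}` if `x < 0`, `{1}` if `x > 0`,
and `{-1, 1}` if `x = 0`. -/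
theorem sign_as_sos_partial_min
    (p : ℝ → ℝ → ℝ)
    (hp : ∀ x y : ℝ, p x y = 4 - 3*x*y - 4*y^2 + x*y^3 + 2*y^4)
    (x : ℝ) (hx : x ∈ Set.Icc (-1 : ℝ) 1) :
    (x < 0 → {y : ℝ | ∀ y' : ℝ, p x y ≤ p x y'} = {-1}) ∧
    (0 < x → {y : ℝ | ∀ y' : ℝ, p x y ≤ p x y'} = {1}) ∧
    (x = 0 → {y : ℝ | ∀ y' : ℝ, p x y ≤ p x y'} = {-1, 1}) := by
  obtain ⟨hx1, hx2⟩ := hx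
  refine ⟨?_, ?_, ?_⟩
  · intro hneg
    ext y
    simp only [Set.mem_setOf_eq, Set.mem_singleton_iff]
    constructor
    · intro h
      have h1 := h (-1)
      rw [hp, hp] at h1
      have hq : 0 < 2*(y-1)^2 + x*(y-2) := by nlinarith [sq_nonneg (4*y + x - 4)]
      have h3 : (y+1)^2 ≤ 0 := by nlinarith [sq_nonneg (y+1)]
      have h4 : (y+1)^2 = 0 := le_antisymm h3 (sq_nonneg _)
      have h5 : y + 1 = 0 := by
        exact pow_eq_zero_iff (by norm_num) |>.mp h4
      linarith
    · rintro rfl y'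
      rw [hp, hp]
      have hq : 0 < 2*(y'-1)^2 + x*(y'-2) := by nlinarith [sq_nonneg (4*y' + x - 4)]
      nlinarith [sq_nonneg (y'+1), mul_nonneg (sq_nonneg (y'+1)) hq.le]
  · intro hpos
    ext y
    simp only [Set.mem_setOf_eq, Set.mem_singleton_iff]
    constructor
    · intro h
      have h1 := h 1
      rw [hp, hp] at h1
      have hq : 0 < 2*(y+1)^2 + x*(y+2) := by nlinarith [sq_nonneg (4*y + x + 4)]
      have h3 : (y-1)^2 ≤ 0 := by nlinarith [sq_nonneg (y-1)]
      have h4 : (y-1)^2 = 0 := le_antisymm h3 (sq_nonneg _)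
      have h5 : y - 1 = 0 := by
        exact pow_eq_zero_iff (by norm_num) |>.mp h4
      linarith
    · rintro rfl y'
      rw [hp, hp]
      have hq : 0 < 2*(y'+1)^2 + x*(y'+2) := by nlinarith [sq_nonneg (4*y' + x + 4)]
      nlinarith [mul_nonneg (sq_nonneg (y'-1)) hq.le]
  · rintro rfl
    ext y
    simp only [Set.mem_setOf_eq, Set.mem_insert_iff, Set.mem_singleton_iff]
    constructor
    · intro h
      have h1 := h 1
      rw [hp, hp] at h1
      have h4 : (y^2-1)^2 = 0 := by nlinarith [sq_nonneg (y^2-1)]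
      have h5 : y^2 - 1 = 0 := by
        exact pow_eq_zero_iff (by norm_num) |>.mp h4
      have h6 : (y+1)*(y-1) = 0 := by nlinarith
      rcases mul_eq_zero.mp h6 with h7 | h7
      · left; linarith
      · right; linarith
    · intro h y'
      rw [hp, hp]
      rcases h with rfl | rfl <;> nlinarith [sq_nonneg (y'^2-1)]
end

section
/- For every x in [-1,1], the unique minimizer over y ∈ ℝ of the polynomial q(x,y) = 11 - 12x⁴y - 6x²y² + 4x²y³ + 3y⁴ is y = |x|. -/
/-- For every `x ∈ [-1,1]`, the unique minimizer over `y ∈ ℝ` of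
`q(x,y) = 11 - 12x⁴y - 6x²y² + 4x²y³ + 3y⁴` is `y = |x|`. -/
theorem abs_as_sos_partial_min
    (q : ℝ → ℝ → ℝ)
    (hq : ∀ x y : ℝ, q x y = 11 - 12*x^4*y - 6*x^2*y^2 + 4*x^2*y^3 + 3*y^4)
    (x : ℝ) (hx : x ∈ Set.Icc (-1 : ℝ) 1) :
    {y : ℝ | ∀ y' : ℝ, q x y ≤ q x y'} = {|x|} := by
  obtain ⟨hx1, hx2⟩ := hx
  set a := |x| with ha
  have ha0 : 0 ≤ a := abs_nonneg x
  have ha1 : a ≤ 1 := abs_le.mpr ⟨hx1, hx2⟩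
  have hx2a : x ^ 2 = a ^ 2 := (sq_abs x).symm
  have hx4a : x ^ 4 = a ^ 4 := by
    have : x ^ 4 = (x ^ 2) ^ 2 := by ring
    rw [this, hx2a]; ring
  have key : ∀ y, y ≠ a → q x a < q x y := by
    intro y hy
    rw [hq, hq, hx2a, hx4a]
    have hya : y - a ≠ 0 := sub_ne_zero.mpr hy
    have h1 : 0 < (y - a) ^ 2 := by positivity
    rcases eq_or_lt_of_le ha0 with h0 | h0
    · -- a = 0
      rw [← h0]
      have hy0 : y ≠ 0 := by rw [← h0] at hy; exact hy
      have : 0 < y ^ 4 := by positivity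
      nlinarith
    · -- a > 0
      have hg : 0 < 3 * y ^ 2 + (4 * a ^ 2 + 6 * a) * y + 8 * a ^ 3 + 3 * a ^ 2 := by
        nlinarith [sq_nonneg (6 * y + 4 * a ^ 2 + 6 * a), mul_pos (mul_pos (mul_pos h0 h0) h0) (by linarith : (0:ℝ) < 3 - a)]
      nlinarith [mul_pos h1 hg]
  ext y
  simp only [Set.mem_setOf_eq, Set.mem_singleton_iff]
  constructor
  · intro h
    by_contra hne
    exact absurd (h a) (not_le.mpr (key y hne))
  · rintro rfl y'
    by_cases hy : y' = a
    · rw [hy]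
    · exact (key y' hy).le
end

section
/- For any integer d ≥ 1 and p ≥ 1, the dimension of the space of polynomials in p variables of degree at most d satisfies binomial(p+d, d) ≤ dᵖ (e/p)ᵖ e^{p²/d}. -/
/-- For integers `d ≥ 1` and `p ≥ 1`, the dimension of the space of polynomials
in `p` variables of degree at most `d` satisfies
`binom(p+d, d) ≤ dᵖ (e/p)ᵖ e^{p²/d}`. -/
theorem choose_le_dim_bound (p d : ℕ) (hp : 1 ≤ p) (hd : 1 ≤ d) :
    ((p + d).choose d : ℝ) ≤
      (d : ℝ)^p * (Real.exp 1 / p)^p * Real.exp ((p : ℝ)^2 / d) := by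
  have hp0 : (0:ℝ) < p := by exact_mod_cast hp
  have hd0 : (0:ℝ) < d := by exact_mod_cast hd
  have hsymm : (p + d).choose d = (p + d).choose p := by
    rw [← Nat.choose_symm (Nat.le_add_left d p)]
    congr 1
    omega
  -- step 1: choose ≤ (p+d)^p / p!
  have h1 : ((p + d).choose p : ℝ) ≤ ((p + d : ℕ) : ℝ) ^ p / (p.factorial : ℝ) :=
    Nat.choose_le_pow_div p (p + d)
  -- step 2: p^p / p! ≤ exp p, hence 1/p! ≤ (exp 1 / p)^p
  have h2 : ((p:ℝ)) ^ p / (p.factorial : ℝ) ≤ Real.exp p :=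
    Real.pow_div_factorial_le_exp (x := (p:ℝ)) (le_of_lt hp0) p
  have hfac : (0:ℝ) < (p.factorial : ℝ) := by exact_mod_cast p.factorial_pos
  have h2' : 1 / (p.factorial : ℝ) ≤ (Real.exp 1 / p) ^ p := by
    rw [div_pow, Real.exp_one_pow]
    rw [div_le_div_iff₀ hfac (pow_pos hp0 p), one_mul]
    calc ((p:ℝ))^p = ((p:ℝ))^p / (p.factorial : ℝ) * (p.factorial : ℝ) := by
          field_simp
      _ ≤ Real.exp p * (p.factorial : ℝ) := by
          exact mul_le_mul_of_nonneg_right h2 (le_of_lt hfac)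
  -- step 3: (p+d)^p ≤ d^p * exp(p^2/d)
  have h3 : ((p + d : ℕ) : ℝ) ^ p ≤ (d:ℝ) ^ p * Real.exp ((p:ℝ)^2 / d) := by
    have hb : ((p + d : ℕ) : ℝ) ≤ (d:ℝ) * Real.exp ((p:ℝ) / d) := by
      have := Real.add_one_le_exp ((p:ℝ) / d)
      have h := mul_le_mul_of_nonneg_left this (le_of_lt hd0)
      rw [mul_add, mul_one, mul_div_cancel₀ _ (ne_of_gt hd0)] at h
      push_cast
      linarith
    calc ((p + d : ℕ) : ℝ) ^ p ≤ ((d:ℝ) * Real.exp ((p:ℝ) / d)) ^ p := by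
          exact pow_le_pow_left₀ (by positivity) hb p
      _ = (d:ℝ) ^ p * Real.exp ((p:ℝ)^2 / d) := by
          rw [mul_pow, ← Real.exp_nat_mul]
          congr 2
          field_simp
  rw [hsymm]
  calc ((p + d).choose p : ℝ) ≤ ((p + d : ℕ) : ℝ) ^ p / (p.factorial : ℝ) := h1
    _ = ((p + d : ℕ) : ℝ) ^ p * (1 / (p.factorial : ℝ)) := by ring
    _ ≤ ((d:ℝ) ^ p * Real.exp ((p:ℝ)^2 / d)) * (Real.exp 1 / p) ^ p := by
        apply mul_le_mul h3 h2' (by positivity) (by positivity)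
    _ = (d : ℝ)^p * (Real.exp 1 / p)^p * Real.exp ((p : ℝ)^2 / d) := by ring
end

section
/- For all δ ∈ (0,1) and all integers d ≥ 1, there exists a polynomial q in p variables of degree at most 2d such that q(0) = 1, |q(z)| ≤ 1 for all z in the closed unit Euclidean ball B₁, and |q(z)| ≤ 2^{1-δd} for all z ∈ B₁ \ B_δ, where B_δ is the closed ball of radius δ. -/
/-!
Let `T_d` be the Chebyshev polynomial and `w(s) = (1 + δ² - 2s) / (1 - δ²)` the decreasing affine
map sending `[δ², 1]` onto `[-1, 1]`; take `q(z) = T_d(w(‖z‖²)) / T_d(w(0))`, of degree `2d`.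
On the unit ball `w(‖z‖²)` ranges over `[-1, w(0)]`, where `|T_d| ≤ T_d(w(0))` because `|T_d| ≤ 1`
on `[-1, 1]` and `T_d` increases on `[1, ∞)`; outside `B_δ` it stays in `[-1, 1]`, so
`|q| ≤ 1 / T_d(w(0))` there. Finally `w(0) = (r + r⁻¹) / 2` for `r = (1 + δ) / (1 - δ)`, whence
`T_d(w(0)) = (r^d + r^{-d}) / 2 ≥ r^d / 2 ≥ (1 + δ)^d / 2 ≥ 2^{δd - 1}` by Bernoulli's inequality.
-/

open Polynomial Real

namespace Polynomial.Chebyshev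

theorem eval_T_real_le_eval_T_real (n : ℤ) {x y : ℝ} (hx : 1 ≤ x) (hxy : x ≤ y) :
    (T ℝ n).eval x ≤ (T ℝ n).eval y := by
  have hy : 1 ≤ y := hx.trans hxy
  rw [← cosh_arcosh hx, ← cosh_arcosh hy, T_real_cosh, T_real_cosh, cosh_le_cosh, abs_mul,
    abs_mul, abs_of_nonneg (arcosh_nonneg hx), abs_of_nonneg (arcosh_nonneg hy)]
  gcongr
  exact (arcosh_le_arcosh (by positivity) (by positivity)).2 hxy

theorem abs_eval_T_real_le_eval_T_real (n : ℤ) {x y : ℝ} (hx : -1 ≤ x) (hxy : x ≤ y)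
    (hy : 1 ≤ y) : |(T ℝ n).eval x| ≤ (T ℝ n).eval y := by
  rcases le_or_gt x 1 with hx1 | hx1
  · exact (abs_eval_T_real_le_one n (abs_le.2 ⟨hx, hx1⟩)).trans (one_le_eval_T_real n hy)
  · rw [abs_of_nonneg (zero_le_one.trans (one_le_eval_T_real n hx1.le))]
    exact eval_T_real_le_eval_T_real n hx1.le hxy

theorem pow_div_two_le_eval_T_real (n : ℕ) {r : ℝ} (hr : 0 < r) :
    r ^ n / 2 ≤ (T ℝ n).eval ((r + r⁻¹) / 2) := by
  rw [← cosh_log hr, T_real_cosh, cosh_eq, Int.cast_natCast, exp_nat_mul, exp_log hr]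
  gcongr
  exact le_add_of_nonneg_right (exp_pos _).le

end Polynomial.Chebyshev

namespace MvPolynomial

variable {σ R : Type*} [CommSemiring R]

theorem totalDegree_aeval_le (P : R[X]) (L : MvPolynomial σ R) :
    (Polynomial.aeval L P).totalDegree ≤ P.natDegree * L.totalDegree := by
  rw [aeval_eq_sum_range]
  refine (totalDegree_finsetSum _ _).trans (Finset.sup_le fun k hk => ?_)
  refine (totalDegree_smul_le _ _).trans ((totalDegree_pow _ _).trans ?_)
  gcongr
  exact Nat.lt_succ_iff.1 (Finset.mem_range.1 hk)

theorem totalDegree_sum_X_sq_le [Fintype σ] :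
    (∑ i, X i ^ 2 : MvPolynomial σ R).totalDegree ≤ 2 :=
  (totalDegree_finsetSum _ _).trans <| Finset.sup_le fun i _ => by
    rw [X_pow_eq_monomial]
    exact (totalDegree_monomial_le _ _).trans (by simp)

theorem eval_aeval (x : σ → R) (P : R[X]) (L : MvPolynomial σ R) :
    eval x (Polynomial.aeval L P) = P.eval (eval x L) := by
  simpa using (Polynomial.aeval_algHom_apply (aeval x) L P).symm

theorem eval_aeval_sum_X_sq {ι : Type*} [Fintype ι] (P : ℝ[X]) (z : EuclideanSpace ℝ ι) :
    eval (fun i => z i) (Polynomial.aeval (∑ i, X i ^ 2) P) = P.eval (‖z‖ ^ 2) := by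
  simp [eval_aeval, EuclideanSpace.real_norm_sq_eq]

end MvPolynomial

section Needle

open Polynomial.Chebyshev

variable {δ : ℝ}

noncomputable def needleArg (δ : ℝ) : ℝ[X] := C (1 - δ ^ 2)⁻¹ * (C (1 + δ ^ 2) - 2 * X)

theorem eval_needleArg (δ s : ℝ) : (needleArg δ).eval s = (1 + δ ^ 2 - 2 * s) / (1 - δ ^ 2) := by
  simp [needleArg, div_eq_inv_mul]

theorem natDegree_needleArg_le (δ : ℝ) : (needleArg δ).natDegree ≤ 1 := by
  unfold needleArg
  compute_degree

theorem eval_needleArg_zero (hδ0 : 0 ≤ δ) (hδ1 : δ < 1) :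
    (needleArg δ).eval 0 = ((1 + δ) / (1 - δ) + ((1 + δ) / (1 - δ))⁻¹) / 2 := by
  have : 1 - δ ≠ 0 := by linarith
  have : 1 + δ ≠ 0 := by linarith
  have : 1 - δ ^ 2 ≠ 0 := by nlinarith
  rw [eval_needleArg]
  field_simp
  ring

theorem one_le_eval_needleArg_zero (hδ : δ ^ 2 < 1) : 1 ≤ (needleArg δ).eval 0 := by
  rw [eval_needleArg, one_le_div (by linarith)]
  nlinarith

theorem neg_one_le_eval_needleArg (hδ : δ ^ 2 < 1) {s : ℝ} (hs : s ≤ 1) :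
    -1 ≤ (needleArg δ).eval s := by
  rw [eval_needleArg, le_div_iff₀ (by linarith)]
  linarith

theorem eval_needleArg_le_eval_zero (hδ : δ ^ 2 < 1) {s : ℝ} (hs : 0 ≤ s) :
    (needleArg δ).eval s ≤ (needleArg δ).eval 0 := by
  rw [eval_needleArg, eval_needleArg]
  gcongr

theorem eval_needleArg_le_one (hδ : δ ^ 2 < 1) {s : ℝ} (hs : δ ^ 2 ≤ s) :
    (needleArg δ).eval s ≤ 1 := by
  rw [eval_needleArg, div_le_one (by linarith)]
  linarith

theorem two_rpow_le_eval_T_needleArg_zero (hδ0 : 0 ≤ δ) (hδ1 : δ < 1) (d : ℕ) :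
    (2 : ℝ) ^ (δ * d - 1) ≤ (T ℝ d).eval ((needleArg δ).eval 0) := by
  rw [eval_needleArg_zero hδ0 hδ1]
  calc (2 : ℝ) ^ (δ * d - 1) = ((1 + 1) ^ δ) ^ d / 2 := by
        rw [rpow_sub two_pos, rpow_one, ← rpow_natCast, ← rpow_mul (by norm_num)]
        norm_num
    _ ≤ (1 + δ) ^ d / 2 := by
        gcongr
        simpa using rpow_one_add_le_one_add_mul_self (s := 1) (by norm_num) hδ0 hδ1.le
    _ ≤ ((1 + δ) / (1 - δ)) ^ d / 2 := by
        gcongr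
        rw [le_div_iff₀ (by linarith)]
        nlinarith
    _ ≤ _ := pow_div_two_le_eval_T_real d (by apply div_pos <;> linarith)

noncomputable def needleProfile (δ : ℝ) (d : ℕ) : ℝ[X] :=
  C ((T ℝ d).eval ((needleArg δ).eval 0))⁻¹ * (T ℝ d).comp (needleArg δ)

theorem natDegree_needleProfile_le (δ : ℝ) (d : ℕ) : (needleProfile δ d).natDegree ≤ d := by
  refine (natDegree_C_mul_le _ _).trans (natDegree_comp_le.trans ?_)
  rw [natDegree_T, Int.natAbs_natCast]
  grw [natDegree_needleArg_le, mul_one]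

theorem eval_needleProfile (δ : ℝ) (d : ℕ) (s : ℝ) :
    (needleProfile δ d).eval s =
      (T ℝ d).eval ((needleArg δ).eval s) / (T ℝ d).eval ((needleArg δ).eval 0) := by
  simp [needleProfile, eval_comp, div_eq_inv_mul]

theorem eval_needleProfile_zero (hδ : δ ^ 2 < 1) (d : ℕ) : (needleProfile δ d).eval 0 = 1 := by
  rw [eval_needleProfile, div_self]
  exact (zero_lt_one.trans_le (one_le_eval_T_real d (one_le_eval_needleArg_zero hδ))).ne'

theorem abs_eval_needleProfile_le_one (hδ : δ ^ 2 < 1) (d : ℕ) {s : ℝ} (hs0 : 0 ≤ s)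
    (hs1 : s ≤ 1) : |(needleProfile δ d).eval s| ≤ 1 := by
  have hc0 := zero_lt_one.trans_le (one_le_eval_T_real d (one_le_eval_needleArg_zero hδ))
  rw [eval_needleProfile, abs_div, abs_of_pos hc0, div_le_one hc0]
  exact abs_eval_T_real_le_eval_T_real d (neg_one_le_eval_needleArg hδ hs1)
    (eval_needleArg_le_eval_zero hδ hs0) (one_le_eval_needleArg_zero hδ)

theorem abs_eval_needleProfile_le (hδ0 : 0 ≤ δ) (hδ1 : δ < 1) (d : ℕ) {s : ℝ}
    (hs0 : δ ^ 2 ≤ s) (hs1 : s ≤ 1) : |(needleProfile δ d).eval s| ≤ 2 ^ (1 - δ * d) := by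
  have hδ : δ ^ 2 < 1 := by nlinarith
  have hc := two_rpow_le_eval_T_needleArg_zero hδ0 hδ1 d
  have hc0 : 0 < (T ℝ d).eval ((needleArg δ).eval 0) := (rpow_pos_of_pos two_pos _).trans_le hc
  rw [eval_needleProfile, abs_div, abs_of_pos hc0, div_le_iff₀ hc0]
  calc |(T ℝ d).eval ((needleArg δ).eval s)| ≤ 1 :=
        abs_eval_T_real_le_one d (abs_le.2 ⟨neg_one_le_eval_needleArg hδ hs1,
          eval_needleArg_le_one hδ hs0⟩)
    _ = 2 ^ (1 - δ * d) * 2 ^ (δ * d - 1) := by rw [← rpow_add two_pos]; norm_num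
    _ ≤ _ := by gcongr

end Needle

theorem needle_polynomial_exists_general
    (p : ℕ) (δ : ℝ) (hδ : δ ∈ Set.Ioo (0 : ℝ) 1) (d : ℕ) :
    ∃ q : MvPolynomial (Fin p) ℝ,
      q.totalDegree ≤ 2 * d ∧
      MvPolynomial.eval (fun _ => (0 : ℝ)) q = 1 ∧
      (∀ z : EuclideanSpace ℝ (Fin p), ‖z‖ ≤ 1 →
        |MvPolynomial.eval (fun i => z i) q| ≤ 1) ∧
      (∀ z : EuclideanSpace ℝ (Fin p), ‖z‖ ≤ 1 → δ < ‖z‖ →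
        |MvPolynomial.eval (fun i => z i) q| ≤ (2 : ℝ) ^ (1 - δ * d)) := by
  obtain ⟨hδ0, hδ1⟩ := hδ
  have hδ : δ ^ 2 < 1 := by nlinarith
  refine ⟨Polynomial.aeval (∑ i, MvPolynomial.X i ^ 2) (needleProfile δ d), ?_, ?_, ?_, ?_⟩
  · calc _ ≤ (needleProfile δ d).natDegree * (∑ i, MvPolynomial.X i ^ 2 :
            MvPolynomial (Fin p) ℝ).totalDegree := MvPolynomial.totalDegree_aeval_le _ _
      _ ≤ d * 2 := Nat.mul_le_mul (natDegree_needleProfile_le δ d)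
            MvPolynomial.totalDegree_sum_X_sq_le
      _ = 2 * d := mul_comm _ _
  · rw [show (fun _ => (0 : ℝ)) = fun i => (0 : EuclideanSpace ℝ (Fin p)) i from rfl,
      MvPolynomial.eval_aeval_sum_X_sq, norm_zero, zero_pow two_ne_zero,
      eval_needleProfile_zero hδ]
  · intro z hz
    rw [MvPolynomial.eval_aeval_sum_X_sq]
    exact abs_eval_needleProfile_le_one hδ d (by positivity) (pow_le_one₀ (norm_nonneg z) hz)
  · intro z hz hδz
    rw [MvPolynomial.eval_aeval_sum_X_sq]
    exact abs_eval_needleProfile_le hδ0.le hδ1 d (pow_le_pow_left₀ hδ0.le hδz.le 2)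
      (pow_le_one₀ (norm_nonneg z) hz)

/-- Existence of the needle polynomial: for all `δ ∈ (0,1)` and integers `d ≥ 1`,
there exists a polynomial `q` in `p` variables of degree at most `2d` with
`q(0) = 1`, `|q(z)| ≤ 1` on the closed unit Euclidean ball, and
`|q(z)| ≤ 2^{1-δd}` on `B₁ \ B_δ`. -/
theorem needle_polynomial_exists
    (p : ℕ) (δ : ℝ) (hδ : δ ∈ Set.Ioo (0 : ℝ) 1) (d : ℕ) (hd : 1 ≤ d) :
    ∃ q : MvPolynomial (Fin p) ℝ,
      q.totalDegree ≤ 2 * d ∧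
      MvPolynomial.eval (fun _ => (0 : ℝ)) q = 1 ∧
      (∀ z : EuclideanSpace ℝ (Fin p), ‖z‖ ≤ 1 →
        |MvPolynomial.eval (fun i => z i) q| ≤ 1) ∧
      (∀ z : EuclideanSpace ℝ (Fin p), ‖z‖ ≤ 1 → δ < ‖z‖ →
        |MvPolynomial.eval (fun i => z i) q| ≤ (2 : ℝ) ^ (1 - δ * d)) :=
  needle_polynomial_exists_general p δ hδ d
end

section
/- Let f : ℝ → ℝ have finite total variation V(f) and vanish outside a segment I. Let a, b > 0 and define J = { t ∈ I : ∃ u ∈ I, |t-u| ≤ b and |f(u) - f(t)| > a }. Then the Lebesgue measure of J is at most 2 V(f) b / a. -/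
open MeasureTheory

/-- Key packing estimate: a finset of points, each admitting a nearby big jump of `f`,
with pairwise separation `> 2b`, has cardinality bounded by `V / a`. -/
lemma bv_packing_card (f : ℝ → ℝ) (V a b : ℝ) (ha : 0 < a) (hb : 0 < b)
    (hV : ∀ (n : ℕ) (x : Fin (n+1) → ℝ), StrictMono x →
      ∑ i : Fin n, |f (x i.succ) - f (x i.castSucc)| ≤ V)
    (T : Finset ℝ)
    (hTJ : ∀ t ∈ T, ∃ u, |t - u| ≤ b ∧ a < |f u - f t|)
    (hsep : ∀ x ∈ T, ∀ y ∈ T, x ≠ y → 2*b < |x - y|) :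
    (T.card : ℝ) * a ≤ V := by
  have hV0 : 0 ≤ V := by
    have hsm : StrictMono (fun _ : Fin 1 => (0:ℝ)) := by
      intro i j hij
      have hi := i.isLt; have hj := j.isLt
      rw [Fin.lt_def] at hij
      omega
    simpa using hV 0 (fun _ => 0) hsm
  set m := T.card with hm
  rcases Nat.eq_zero_or_pos m with h0 | hmpos
  · simp [h0, hV0]
  -- enumerate T in increasing order
  set e := T.orderIsoOfFin rfl with he
  set t : Fin m → ℝ := fun i => (e i : ℝ) with htdef
  have ht_mono : StrictMono t := fun i j hij => by
    exact_mod_cast e.strictMono hij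
  have ht_mem : ∀ i, t i ∈ T := fun i => (e i).2
  have hsep' : ∀ i j : Fin m, i < j → 2*b < t j - t i := by
    intro i j hij
    have hne : t i ≠ t j := ne_of_lt (ht_mono hij)
    have := hsep (t i) (ht_mem i) (t j) (ht_mem j) hne
    rw [abs_sub_comm, abs_of_pos (by linarith [ht_mono hij])] at this
    linarith
  choose u hub hua using fun i : Fin m => hTJ (t i) (ht_mem i)
  set p : Fin m → ℝ := fun i => min (t i) (u i) with hp
  set q : Fin m → ℝ := fun i => max (t i) (u i) with hq
  have hune : ∀ i, u i ≠ t i := by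
    intro i h
    have := hua i
    rw [h] at this
    simp at this
    linarith
  have hpq : ∀ i, p i < q i := fun i =>
    min_lt_max.mpr (fun h => hune i h.symm)
  have hqb : ∀ i, q i ≤ t i + b := by
    intro i
    have := abs_le.mp (hub i)
    simp only [hq, max_le_iff]
    constructor <;> linarith [this.1, this.2]
  have hpb : ∀ i, t i - b ≤ p i := by
    intro i
    have := abs_le.mp (hub i)
    simp only [hp, le_min_iff]
    constructor <;> linarith [this.1, this.2]
  have hfa : ∀ i, a < |f (q i) - f (p i)| := by
    intro i
    rcases le_total (t i) (u i) with h | h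
    · simpa [hp, hq, min_eq_left h, max_eq_right h] using hua i
    · have := hua i
      rw [abs_sub_comm] at this
      simpa [hp, hq, min_eq_right h, max_eq_left h] using this
  have hqp : ∀ i j : Fin m, i < j → q i < p j := by
    intro i j hij
    have := hsep' i j hij
    calc q i ≤ t i + b := hqb i
    _ < t j - b := by linarith
    _ ≤ p j := hpb j
  -- build the interleaved sequence
  set y : ℕ → ℝ := fun j =>
    if hj : j / 2 < m then (if j % 2 = 0 then p ⟨j/2, hj⟩ else q ⟨j/2, hj⟩) else 0 with hy
  have hyp : ∀ k (h : k < m), y (2*k) = p ⟨k, h⟩ := by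
    intro k h
    have h1 : (2*k) / 2 = k := by omega
    have h2 : (2*k) % 2 = 0 := by omega
    simp only [hy, h1, h2, dif_pos h]
    simp
  have hyq : ∀ k (h : k < m), y (2*k+1) = q ⟨k, h⟩ := by
    intro k h
    have h1 : (2*k+1) / 2 = k := by omega
    have h2 : (2*k+1) % 2 = 1 := by omega
    simp only [hy, h1, h2, dif_pos h]
    norm_num
  have hstep : ∀ j : ℕ, j + 1 < 2*m → y j < y (j + 1) := by
    intro j hj
    rcases Nat.even_or_odd j with ⟨k, hk⟩ | ⟨k, hk⟩
    · have hkm : k < m := by omega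
      have e1 : j = 2*k := by omega
      rw [e1, show 2*k+1 = 2*k+1 from rfl, hyp k hkm, hyq k hkm]
      exact hpq _
    · have hkm : k < m := by omega
      have hk1m : k + 1 < m := by omega
      have e1 : j = 2*k+1 := by omega
      have e2 : j + 1 = 2*(k+1) := by omega
      rw [e1, hyq k hkm]
      rw [show (2*k+1)+1 = 2*(k+1) from by ring, hyp (k+1) hk1m]
      exact hqp ⟨k, hkm⟩ ⟨k+1, hk1m⟩ (by simp [Fin.lt_def])
  set n := 2*m - 1 with hn
  have hn1 : n + 1 = 2*m := by omega
  set x : Fin (n+1) → ℝ := fun j => y j.val with hx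
  have hxmono : StrictMono x := by
    rw [Fin.strictMono_iff_lt_succ]
    intro i
    have : (i : ℕ) + 1 < 2*m := by omega
    simpa [hx, Fin.val_succ, Fin.coe_castSucc] using hstep i this
  have hsum := hV n x hxmono
  have hsum2 : ∑ i : Fin n, |f (x i.succ) - f (x i.castSucc)|
      = ∑ i ∈ Finset.range n, |f (y (i+1)) - f (y i)| := by
    rw [← Fin.sum_univ_eq_sum_range (fun i => |f (y (i+1)) - f (y i)|) n]
    apply Finset.sum_congr rfl
    intro i _
    simp [hx, Fin.val_succ, Fin.coe_castSucc]
  rw [hsum2] at hsum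
  -- lower bound the sum by the m big jumps
  have hsub : Finset.image (fun k => 2*k) (Finset.range m) ⊆ Finset.range n := by
    intro j hj
    simp only [Finset.mem_image, Finset.mem_range] at hj ⊢
    obtain ⟨k, hk, rfl⟩ := hj
    omega
  have hlow : (m : ℝ) * a ≤ ∑ i ∈ Finset.range n, |f (y (i+1)) - f (y i)| := by
    have h1 : ∑ j ∈ Finset.image (fun k => 2*k) (Finset.range m),
        |f (y (j+1)) - f (y j)| ≤ ∑ i ∈ Finset.range n, |f (y (i+1)) - f (y i)| :=
      Finset.sum_le_sum_of_subset_of_nonneg hsub (fun _ _ _ => abs_nonneg _)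
    have h2 : ∑ j ∈ Finset.image (fun k => 2*k) (Finset.range m),
        |f (y (j+1)) - f (y j)| = ∑ k ∈ Finset.range m, |f (y (2*k+1)) - f (y (2*k))| :=
      Finset.sum_image (fun x _ y _ h => by omega)
    have h3 : ∀ k ∈ Finset.range m, a ≤ |f (y (2*k+1)) - f (y (2*k))| := by
      intro k hk
      rw [Finset.mem_range] at hk
      rw [hyp k hk, hyq k hk]
      exact le_of_lt (hfa _)
    have h4 := Finset.card_nsmul_le_sum (Finset.range m)
      (fun k => |f (y (2*k+1)) - f (y (2*k))|) a h3
    simp only [Finset.card_range, nsmul_eq_mul] at h4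
    linarith [h1, h2.symm ▸ h4, h2 ▸ h4]
  linarith

/-- Covering lemma by induction: if every `2b`-separated finset in `J ∩ (s, ∞)`
has at most `m` points, then the measure of `J ∩ (s, ∞)` is at most `m (2b + ε)`. -/
lemma bv_cover_bound (J : Set ℝ) (b ε : ℝ) (hb : 0 < b) (hε : 0 < ε) :
    ∀ (m : ℕ) (s : ℝ),
      (∀ T : Finset ℝ, (↑T : Set ℝ) ⊆ J ∩ Set.Ioi s →
        (∀ x ∈ T, ∀ y ∈ T, x ≠ y → 2*b < |x - y|) → T.card ≤ m) →
      volume (J ∩ Set.Ioi s) ≤ ENNReal.ofReal (m * (2*b + ε)) := by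
  intro m
  induction m with
  | zero =>
    intro s h
    have hempty : J ∩ Set.Ioi s = ∅ := by
      rw [Set.eq_empty_iff_forall_notMem]
      intro t ht
      have := h {t} (by simpa using ht)
        (by intro x hx y hy hxy
            simp only [Finset.mem_singleton] at hx hy
            exact absurd (hx.trans hy.symm) hxy)
      rw [Finset.card_singleton] at this
      omega
    simp [hempty]
  | succ m ih =>
    intro s h
    by_cases hne : (J ∩ Set.Ioi s).Nonempty
    · have hbdd : BddBelow (J ∩ Set.Ioi s) := ⟨s, fun x hx => le_of_lt hx.2⟩
      set σ := sInf (J ∩ Set.Ioi s) with hσ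
      obtain ⟨t, ht, htσ⟩ := Real.lt_sInf_add_pos hne hε
      have hts : s < t := ht.2
      have hcov : J ∩ Set.Ioi s ⊆ Set.Icc σ (t + 2*b) ∪ (J ∩ Set.Ioi (t + 2*b)) := by
        intro x hx
        rcases le_or_gt x (t + 2*b) with hle | hgt
        · exact Or.inl ⟨csInf_le hbdd hx, hle⟩
        · exact Or.inr ⟨hx.1, hgt⟩
      have htail : volume (J ∩ Set.Ioi (t + 2*b)) ≤ ENNReal.ofReal (m * (2*b + ε)) := by
        apply ih
        intro T hT hTsep
        have htT : t ∉ T := by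
          intro hmem
          have := (hT hmem).2
          simp only [Set.mem_Ioi] at this
          linarith
        have hcard := h (insert t T) ?_ ?_
        · rw [Finset.card_insert_of_notMem htT] at hcard
          omega
        · intro x hx
          simp only [Finset.coe_insert, Set.mem_insert_iff] at hx
          rcases hx with rfl | hx
          · exact ht
          · have h2 : t + 2*b < x := (hT hx).2
            exact ⟨(hT hx).1, by simp only [Set.mem_Ioi]; linarith⟩
        · intro x hx y hy hxy
          simp only [Finset.mem_insert] at hx hy
          rcases hx with rfl | hx <;> rcases hy with rfl | hy
          · exact absurd rfl hxy
          · have := (hT hy).2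
            simp only [Set.mem_Ioi] at this
            rw [abs_sub_comm, abs_of_pos (by linarith)]
            linarith
          · have := (hT hx).2
            simp only [Set.mem_Ioi] at this
            rw [abs_of_pos (by linarith)]
            linarith
          · exact hTsep x hx y hy hxy
      have hσt : σ ≤ t := csInf_le hbdd ht
      calc volume (J ∩ Set.Ioi s)
          ≤ volume (Set.Icc σ (t + 2*b) ∪ (J ∩ Set.Ioi (t + 2*b))) := measure_mono hcov
        _ ≤ volume (Set.Icc σ (t + 2*b)) + volume (J ∩ Set.Ioi (t + 2*b)) :=
            measure_union_le _ _
        _ ≤ ENNReal.ofReal (2*b + ε) + ENNReal.ofReal (m * (2*b + ε)) := by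
            apply add_le_add _ htail
            rw [Real.volume_Icc]
            exact ENNReal.ofReal_le_ofReal (by linarith)
        _ = ENNReal.ofReal ((m + 1 : ℕ) * (2*b + ε)) := by
            rw [← ENNReal.ofReal_add (by linarith) (by positivity)]
            congr 1
            push_cast
            ring
    · rw [Set.not_nonempty_iff_eq_empty] at hne
      simp [hne]

/-- Packing lemma for functions of bounded variation: if `f : ℝ → ℝ` has
(Jordan) total variation at most `V` and vanishes outside a segment `I`, and
`J = {t ∈ I : ∃ u ∈ I, |t-u| ≤ b, |f(u)-f(t)| > a}`, then `vol(J) ≤ 2Vb/a`. -/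
theorem bounded_variation_packing
    (f : ℝ → ℝ) (c C : ℝ) (I : Set ℝ) (hI : I = Set.Icc c C)
    (hvanish : ∀ t ∉ I, f t = 0)
    (V : ℝ)
    (hV : ∀ (n : ℕ) (x : Fin (n+1) → ℝ), StrictMono x →
      ∑ i : Fin n, |f (x i.succ) - f (x i.castSucc)| ≤ V)
    (a b : ℝ) (ha : 0 < a) (hb : 0 < b)
    (J : Set ℝ)
    (hJ : J = {t ∈ I | ∃ u ∈ I, |t - u| ≤ b ∧ a < |f u - f t|}) :
    volume J ≤ ENNReal.ofReal (2 * V * b / a) := by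
  have hV0 : 0 ≤ V := by
    have hsm : StrictMono (fun _ : Fin 1 => (0:ℝ)) := by
      intro i j hij
      have hi := i.isLt; have hj := j.isLt
      rw [Fin.lt_def] at hij
      omega
    simpa using hV 0 (fun _ => 0) hsm
  -- every separated finset in J has card ≤ ⌊V/a⌋₊
  set m₀ := ⌊V / a⌋₊ with hm₀
  have hcardbd : ∀ T : Finset ℝ, (↑T : Set ℝ) ⊆ J →
      (∀ x ∈ T, ∀ y ∈ T, x ≠ y → 2*b < |x - y|) → T.card ≤ m₀ := by
    intro T hT hsep
    have hkey : (T.card : ℝ) * a ≤ V := by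
      apply bv_packing_card f V a b ha hb hV T _ hsep
      intro t htT
      have := hT htT
      rw [hJ] at this
      obtain ⟨-, u, -, hub, hua⟩ := this
      exact ⟨u, hub, hua⟩
    apply Nat.le_floor
    rw [le_div_iff₀ ha]
    exact hkey
  have hJsub : J ⊆ Set.Ioi (c - 1) := by
    intro t htJ
    rw [hJ] at htJ
    have := htJ.1
    rw [hI] at this
    simp only [Set.mem_Ioi]
    linarith [this.1]
  have hJeq : J ∩ Set.Ioi (c - 1) = J := Set.inter_eq_self_of_subset_left hJsub
  have hmain : ∀ ε : ℝ, 0 < ε → volume J ≤ ENNReal.ofReal (m₀ * (2*b + ε)) := by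
    intro ε hε
    rw [← hJeq]
    apply bv_cover_bound J b ε hb hε m₀ (c - 1)
    intro T hT hsep
    exact hcardbd T (fun x hx => (hT hx).1) hsep
  have hm₀le : (m₀ : ℝ) ≤ V / a := Nat.floor_le (by positivity)
  apply ENNReal.le_of_forall_pos_le_add
  intro δ hδ _
  set ε := a * δ / (V + 1) with hεdef
  have hεpos : 0 < ε := by
    apply div_pos (mul_pos ha (by exact_mod_cast hδ)) (by linarith)
  calc volume J ≤ ENNReal.ofReal (m₀ * (2*b + ε)) := hmain ε hεpos
    _ ≤ ENNReal.ofReal (2 * V * b / a + δ) := by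
        apply ENNReal.ofReal_le_ofReal
        have h1 : (m₀ : ℝ) * (2*b + ε) ≤ (V / a) * (2*b + ε) := by
          apply mul_le_mul_of_nonneg_right hm₀le (by linarith)
        have h2 : (V / a) * (2*b + ε) = 2 * V * b / a + V * ε / a := by ring
        have h3 : V * ε / a ≤ (δ : ℝ) := by
          rw [hεdef]
          rw [div_le_iff₀ ha] at *
          have : V / (V + 1) ≤ 1 := by
            rw [div_le_one (by linarith)]; linarith
          calc V * (a * δ / (V + 1)) = (V / (V + 1)) * δ * a := by ring
            _ ≤ 1 * δ * a := by
                apply mul_le_mul_of_nonneg_right _ (le_of_lt ha)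
                apply mul_le_mul_of_nonneg_right this (by positivity)
            _ = (δ : ℝ) * a := by ring
        linarith
    _ ≤ ENNReal.ofReal (2 * V * b / a) + δ := by
        calc ENNReal.ofReal (2 * V * b / a + δ)
            ≤ ENNReal.ofReal (2 * V * b / a) + ENNReal.ofReal δ := ENNReal.ofReal_add_le
          _ = ENNReal.ofReal (2 * V * b / a) + δ := by
              rw [ENNReal.ofReal_coe_nnreal]
end
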